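/- arXiv:2212.09391 — 2 statements merged into one kernel-verified Lean document; each statement's English description precedes it below -/
import Mathlib

section
/- For rejective sampling with parameter S and weights p_i ∈ (0,1), the matrix of first and second order inclusion probabilities satisfies E_S[1_I 1_I^*] ⪯ π π^* + 2 D_π in the positive semi-definite order, where π is the vector of first order inclusion probabilities and D_π = diag(π). -/
open Finset

/-- Poisson sampling probability of the sample `I`. -/
noncomputable def PB {N : ℕ} (p : Fin N → ℝ) (I : Finset (Fin N)) : ℝ :=
  (∏ i ∈ I, p i) * ∏ j ∈ Iᶜ, (1 - p j)

/-- Inclusion probability `π_L(S)` under rejective sampling with parameter `S`. -/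
noncomputable def incl {N : ℕ} (p : Fin N → ℝ) (S : ℕ) (L : Finset (Fin N)) : ℝ :=
  (∑ I ∈ univ.filter (fun I => I.card = S ∧ L ⊆ I), PB p I) /
  (∑ I ∈ univ.filter (fun I => I.card = S), PB p I)

open scoped Matrix Matrix.Norms.L2Operator

/-- The matrix `E_S[1_{I\L} 1_{I\L}^* ⋅ 𝟙{L ⊆ I}]` of conditional second order
inclusion probabilities; for `L = ∅` this is `E_S[1_I 1_I^*]`. -/
noncomputable def condMat {N : ℕ} (p : Fin N → ℝ) (S : ℕ) (L : Finset (Fin N)) :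
    Matrix (Fin N) (Fin N) ℝ :=
  Matrix.of fun i j =>
    (∑ I ∈ univ.filter (fun I => I.card = S ∧ L ⊆ I ∧ i ∈ I \ L ∧ j ∈ I \ L), PB p I) /
    (∑ I ∈ univ.filter (fun I => I.card = S), PB p I)


set_option linter.unusedSectionVars false
set_option linter.unusedVariables false
namespace RejAux

variable {α : Type*} [DecidableEq α] [Fintype α]

/-- elementary symmetric sum -/
noncomputable def E (w : α → ℝ) (T : Finset α) (k : ℕ) : ℝ :=
  ∑ J ∈ T.powersetCard k, ∏ i ∈ J, w i

lemma E_zero (w : α → ℝ) (T : Finset α) : E w T 0 = 1 := by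
  simp [E]

lemma E_nonneg {w : α → ℝ} (hw : ∀ i, 0 ≤ w i) (T : Finset α) (k : ℕ) : 0 ≤ E w T k :=
  Finset.sum_nonneg fun J _ => Finset.prod_nonneg fun i _ => hw i

lemma E_pos {w : α → ℝ} (hw : ∀ i, 0 < w i) {T : Finset α} {k : ℕ} (hk : k ≤ T.card) :
    0 < E w T k := by
  obtain ⟨J, hJ, hcard⟩ := Finset.exists_subset_card_eq hk
  have hJmem : J ∈ T.powersetCard k := Finset.mem_powersetCard.2 ⟨hJ, hcard⟩
  refine lt_of_lt_of_le ?_ (Finset.single_le_sum (f := fun J => ∏ i ∈ J, w i)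
    (fun J _ => Finset.prod_nonneg fun i _ => (hw i).le) hJmem)
  exact Finset.prod_pos fun i _ => hw i

lemma E_eq_zero {w : α → ℝ} {T : Finset α} {k : ℕ} (hk : T.card < k) : E w T k = 0 := by
  rw [E, Finset.powersetCard_eq_empty.2 hk, Finset.sum_empty]

lemma E_insert {w : α → ℝ} {a : α} {T : Finset α} (ha : a ∉ T) (k : ℕ) :
    E w (insert a T) (k + 1) = E w T (k + 1) + w a * E w T k := by
  rw [E, Finset.powersetCard_succ_insert ha]
  rw [Finset.sum_union]
  · congr 1
    rw [Finset.sum_image]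
    · rw [E, Finset.mul_sum]
      refine Finset.sum_congr rfl fun J hJ => ?_
      have haJ : a ∉ J := fun h => ha ((Finset.mem_powersetCard.1 hJ).1 h)
      rw [Finset.prod_insert haJ]
    · intro J hJ K hK hJK
      have haJ : a ∉ J := fun h => ha ((Finset.mem_powersetCard.1 hJ).1 h)
      have haK : a ∉ K := fun h => ha ((Finset.mem_powersetCard.1 hK).1 h)
      have := congrArg (fun s => Finset.erase s a) hJK
      simpa [Finset.erase_insert haJ, Finset.erase_insert haK] using this
  · rw [Finset.disjoint_left]
    intro J hJ hJ'
    obtain ⟨K, hK, rfl⟩ := Finset.mem_image.1 hJ'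
    have haK : a ∉ K := fun h => ha ((Finset.mem_powersetCard.1 hK).1 h)
    have : a ∈ T := (Finset.mem_powersetCard.1 hJ).1 (Finset.mem_insert_self a K)
    exact ha this

end RejAux

namespace RejAux

variable {α : Type*} [DecidableEq α] [Fintype α]

lemma E_skew {w : α → ℝ} (hw : ∀ i, 0 < w i) (T : Finset α)
    (IH : ∀ k, E w T (k + 2) * E w T k ≤ E w T (k + 1) * E w T (k + 1)) (k : ℕ) :
    E w T (k + 3) * E w T k ≤ E w T (k + 2) * E w T (k + 1) := by
  by_cases h : E w T (k + 3) = 0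
  · rw [h, zero_mul]
    exact mul_nonneg (E_nonneg (fun i => (hw i).le) _ _) (E_nonneg (fun i => (hw i).le) _ _)
  · have hle : k + 3 ≤ T.card := by
      by_contra hc
      exact h (E_eq_zero (by omega))
    have hp1 : 0 < E w T (k + 1) := E_pos hw (by omega)
    have hp2 : 0 < E w T (k + 2) := E_pos hw (by omega)
    have h1 := IH (k + 1)
    have h2 := IH k
    have key : (E w T (k + 3) * E w T k) * (E w T (k + 2) * E w T (k + 1)) ≤
        (E w T (k + 2) * E w T (k + 1)) * (E w T (k + 2) * E w T (k + 1)) := by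
      have := mul_le_mul h1 h2
        (mul_nonneg (E_nonneg (fun i => (hw i).le) _ _) (E_nonneg (fun i => (hw i).le) _ _))
        (mul_nonneg hp2.le hp2.le)
      nlinarith [this]
    exact le_of_mul_le_mul_right key (mul_pos hp2 hp1)

lemma E_logConcave {w : α → ℝ} (hw : ∀ i, 0 < w i) (T : Finset α) (k : ℕ) :
    E w T (k + 2) * E w T k ≤ E w T (k + 1) * E w T (k + 1) := by
  induction T using Finset.induction generalizing k with
  | empty =>
    rw [E_eq_zero (by simp), zero_mul]
    exact mul_nonneg (E_nonneg (fun i => (hw i).le) _ _) (E_nonneg (fun i => (hw i).le) _ _)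
  | @insert a T ha IH =>
    have hwn : ∀ i, (0:ℝ) ≤ w i := fun i => (hw i).le
    cases k with
    | zero =>
      rw [E_insert ha 1, E_insert ha 0, E_zero, E_zero]
      have h2 := IH 0
      rw [E_zero] at h2
      nlinarith [hw a, E_nonneg hwn T 1, h2]
    | succ k =>
      rw [E_insert ha (k + 2), E_insert ha (k + 1), E_insert ha k]
      have h1 := IH (k + 1)
      have h2 := IH k
      have h3 := E_skew hw T IH k
      nlinarith [hw a, mul_le_mul_of_nonneg_left h3 (hw a).le,
        mul_le_mul_of_nonneg_left h2 (mul_nonneg (hw a).le (hw a).le), h1]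

end RejAux

namespace RejAux

variable {N : ℕ}

noncomputable def ww (p : Fin N → ℝ) (i : Fin N) : ℝ := p i / (1 - p i)

lemma ww_pos {p : Fin N → ℝ} (hp : ∀ i, p i ∈ Set.Ioo (0:ℝ) 1) (i : Fin N) : 0 < ww p i :=
  div_pos (hp i).1 (by linarith [(hp i).2])

lemma PB_eq {p : Fin N → ℝ} (hp : ∀ i, p i ∈ Set.Ioo (0:ℝ) 1) (I : Finset (Fin N)) :
    PB p I = (∏ j, (1 - p j)) * ∏ i ∈ I, ww p i := by
  have h1 : ∀ i : Fin N, (1 - p i) ≠ 0 := fun i => ne_of_gt (by linarith [(hp i).2])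
  have key : ∏ i ∈ I, p i = (∏ i ∈ I, (1 - p i)) * ∏ i ∈ I, ww p i := by
    rw [← Finset.prod_mul_distrib]
    refine Finset.prod_congr rfl fun i _ => ?_
    rw [ww, mul_comm, div_mul_cancel₀ _ (h1 i)]
  rw [PB, key, ← Finset.prod_mul_prod_compl I (fun j => 1 - p j)]
  ring

lemma Cpos {p : Fin N → ℝ} (hp : ∀ i, p i ∈ Set.Ioo (0:ℝ) 1) :
    0 < ∏ j, (1 - p j) :=
  Finset.prod_pos fun j _ => by linarith [(hp j).2]

lemma filter_card_eq : univ.filter (fun I : Finset (Fin N) => I.card = S) =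
    (univ : Finset (Fin N)).powersetCard S := by
  ext I
  simp [Finset.mem_powersetCard]

lemma NL {p : Fin N → ℝ} {S : ℕ} (L : Finset (Fin N)) (hL : L.card ≤ S) :
    ∑ I ∈ univ.filter (fun I => I.card = S ∧ L ⊆ I), ∏ i ∈ I, ww p i =
      (∏ i ∈ L, ww p i) * E (ww p) Lᶜ (S - L.card) := by
  rw [E, Finset.mul_sum]
  refine Finset.sum_bij' (fun I _ => I \ L) (fun J _ => J ∪ L) ?_ ?_ ?_ ?_ ?_
  · intro I hI
    simp only [Finset.mem_filter, Finset.mem_univ, true_and] at hI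
    rw [Finset.mem_powersetCard]
    constructor
    · intro x hx
      simp only [Finset.mem_sdiff] at hx
      simp [hx.2]
    · rw [Finset.card_sdiff_of_subset hI.2, hI.1]
  · intro J hJ
    rw [Finset.mem_powersetCard] at hJ
    have hdisj : Disjoint J L := by
      rw [Finset.disjoint_left]
      intro x hx hxL
      have := hJ.1 hx
      simp at this
      exact this hxL
    simp only [Finset.mem_filter, Finset.mem_univ, true_and]
    constructor
    · rw [Finset.card_union_of_disjoint hdisj, hJ.2, Nat.sub_add_cancel hL]
    · exact Finset.subset_union_right
  · intro I hI
    simp only [Finset.mem_filter, Finset.mem_univ, true_and] at hI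
    exact Finset.sdiff_union_of_subset hI.2
  · intro J hJ
    rw [Finset.mem_powersetCard] at hJ
    have hdisj : Disjoint J L := by
      rw [Finset.disjoint_left]
      intro x hx hxL
      have := hJ.1 hx
      simp at this
      exact this hxL
    show (J ∪ L) \ L = J
    rw [Finset.union_sdiff_cancel_right hdisj]
  · intro I hI
    simp only [Finset.mem_filter, Finset.mem_univ, true_and] at hI
    rw [← Finset.prod_sdiff hI.2]
    ring

end RejAux

namespace RejAux

variable {N : ℕ}

noncomputable def Zf (p : Fin N → ℝ) (S : ℕ) : ℝ :=
  ∑ I ∈ univ.filter (fun I : Finset (Fin N) => I.card = S), ∏ i ∈ I, ww p i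

noncomputable def Nf (p : Fin N → ℝ) (S : ℕ) (i : Fin N) : ℝ :=
  ∑ I ∈ univ.filter (fun I : Finset (Fin N) => I.card = S ∧ i ∈ I), ∏ i ∈ I, ww p i

noncomputable def Mf (p : Fin N → ℝ) (S : ℕ) (i j : Fin N) : ℝ :=
  ∑ I ∈ univ.filter (fun I : Finset (Fin N) => I.card = S ∧ i ∈ I ∧ j ∈ I), ∏ i ∈ I, ww p i

lemma Zf_eq (p : Fin N → ℝ) (S : ℕ) : Zf p S = E (ww p) Finset.univ S := by
  rw [Zf, filter_card_eq, E]

lemma Zf_pos {p : Fin N → ℝ} (hp : ∀ i, p i ∈ Set.Ioo (0:ℝ) 1) {S : ℕ} (hS : S ≤ N) :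
    0 < Zf p S := by
  rw [Zf_eq]
  exact E_pos (ww_pos hp) (by simpa using hS)

lemma Nf_nonneg {p : Fin N → ℝ} (hp : ∀ i, p i ∈ Set.Ioo (0:ℝ) 1) (S : ℕ) (i : Fin N) :
    0 ≤ Nf p S i :=
  Finset.sum_nonneg fun I _ => Finset.prod_nonneg fun x _ => (ww_pos hp x).le

lemma Mf_nonneg {p : Fin N → ℝ} (hp : ∀ i, p i ∈ Set.Ioo (0:ℝ) 1) (S : ℕ) (i j : Fin N) :
    0 ≤ Mf p S i j :=
  Finset.sum_nonneg fun I _ => Finset.prod_nonneg fun x _ => (ww_pos hp x).le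

lemma Mf_symm (p : Fin N → ℝ) (S : ℕ) (i j : Fin N) : Mf p S i j = Mf p S j i := by
  rw [Mf, Mf]
  congr 1
  ext I
  simp only [Finset.mem_filter]
  tauto

lemma Mf_diag (p : Fin N → ℝ) (S : ℕ) (i : Fin N) : Mf p S i i = Nf p S i := by
  rw [Mf, Nf]
  congr 1
  ext I
  simp only [Finset.mem_filter]
  tauto

lemma K3 (p : Fin N → ℝ) (S : ℕ) : ∑ j, Nf p S j = (S : ℝ) * Zf p S := by
  have hfil : ∀ j : Fin N, univ.filter (fun I : Finset (Fin N) => I.card = S ∧ j ∈ I) =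
      (univ.filter (fun I : Finset (Fin N) => I.card = S)).filter (fun I => j ∈ I) := by
    intro j; rw [Finset.filter_filter]
  calc ∑ j, Nf p S j
      = ∑ j, ∑ I ∈ univ.filter (fun I : Finset (Fin N) => I.card = S),
          (if j ∈ I then ∏ i ∈ I, ww p i else 0) := by
        refine Finset.sum_congr rfl fun j _ => ?_
        rw [Nf, hfil j, Finset.sum_filter]
    _ = ∑ I ∈ univ.filter (fun I : Finset (Fin N) => I.card = S),
          ∑ j, (if j ∈ I then ∏ i ∈ I, ww p i else 0) := Finset.sum_comm
    _ = ∑ I ∈ univ.filter (fun I : Finset (Fin N) => I.card = S),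
          (S : ℝ) * ∏ i ∈ I, ww p i := by
        refine Finset.sum_congr rfl fun I hI => ?_
        rw [Finset.sum_ite_mem, Finset.univ_inter, Finset.sum_const]
        simp only [Finset.mem_filter] at hI
        rw [hI.2, nsmul_eq_mul]
    _ = (S : ℝ) * Zf p S := by rw [Zf, Finset.mul_sum]

lemma K2 (p : Fin N → ℝ) (S : ℕ) (i : Fin N) : ∑ j, Mf p S i j = (S : ℝ) * Nf p S i := by
  have hfil : ∀ j : Fin N, univ.filter (fun I : Finset (Fin N) => I.card = S ∧ i ∈ I ∧ j ∈ I) =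
      (univ.filter (fun I : Finset (Fin N) => I.card = S ∧ i ∈ I)).filter (fun I => j ∈ I) := by
    intro j; rw [Finset.filter_filter]; congr 1; ext I; tauto
  calc ∑ j, Mf p S i j
      = ∑ j, ∑ I ∈ univ.filter (fun I : Finset (Fin N) => I.card = S ∧ i ∈ I),
          (if j ∈ I then ∏ x ∈ I, ww p x else 0) := by
        refine Finset.sum_congr rfl fun j _ => ?_
        rw [Mf, hfil j, Finset.sum_filter]
    _ = ∑ I ∈ univ.filter (fun I : Finset (Fin N) => I.card = S ∧ i ∈ I),
          ∑ j, (if j ∈ I then ∏ x ∈ I, ww p x else 0) := Finset.sum_comm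
    _ = ∑ I ∈ univ.filter (fun I : Finset (Fin N) => I.card = S ∧ i ∈ I),
          (S : ℝ) * ∏ x ∈ I, ww p x := by
        refine Finset.sum_congr rfl fun I hI => ?_
        rw [Finset.sum_ite_mem, Finset.univ_inter, Finset.sum_const]
        simp only [Finset.mem_filter] at hI
        rw [hI.2.1, nsmul_eq_mul]
    _ = (S : ℝ) * Nf p S i := by rw [Nf, Finset.mul_sum]

end RejAux

namespace RejAux

variable {N : ℕ}

lemma K1 {p : Fin N → ℝ} (hp : ∀ i, p i ∈ Set.Ioo (0:ℝ) 1) (S : ℕ)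
    {i j : Fin N} (hij : i ≠ j) :
    Mf p S i j * Zf p S ≤ Nf p S i * Nf p S j := by
  rcases lt_or_ge S 2 with h2 | h2
  · have hM0 : Mf p S i j = 0 := by
      rw [Mf]
      convert Finset.sum_empty
      rw [Finset.filter_eq_empty_iff]
      rintro I - ⟨hc, hi, hj⟩
      have hsub : ({i, j} : Finset (Fin N)) ⊆ I := by
        intro x hx
        simp only [Finset.mem_insert, Finset.mem_singleton] at hx
        rcases hx with rfl | rfl <;> assumption
      have hcard := Finset.card_le_card hsub
      rw [Finset.card_insert_of_notMem (by simp [hij]), Finset.card_singleton] at hcard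
      omega
    rw [hM0, zero_mul]
    exact mul_nonneg (Nf_nonneg hp S i) (Nf_nonneg hp S j)
  · obtain ⟨k, rfl⟩ : ∃ k, S = k + 2 := ⟨S - 2, by omega⟩
    have hww := ww_pos hp
    set u := ww p i with hu
    set v := ww p j with hv
    set U : Finset (Fin N) := ({i, j} : Finset (Fin N))ᶜ with hU
    have hjU : j ∉ U := by simp [hU]
    have hiU : i ∉ insert j U := by simp [hU, hij]
    have hins1 : insert j U = ({i} : Finset (Fin N))ᶜ := by
      ext x
      simp only [Finset.mem_insert, hU, Finset.mem_compl, Finset.mem_insert,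
        Finset.mem_singleton]
      constructor
      · rintro (rfl | h)
        · exact fun h => hij h.symm
        · tauto
      · intro hx
        by_cases hxj : x = j
        · exact Or.inl hxj
        · exact Or.inr (by tauto)
    have hins3 : insert i U = ({j} : Finset (Fin N))ᶜ := by
      ext x
      simp only [Finset.mem_insert, hU, Finset.mem_compl, Finset.mem_insert,
        Finset.mem_singleton]
      constructor
      · rintro (rfl | h)
        · exact fun hh => hij hh
        · tauto
      · intro hx
        by_cases hxi : x = i
        · exact Or.inl hxi
        · exact Or.inr (by tauto)
    have hins2 : insert i (insert j U) = (Finset.univ : Finset (Fin N)) := by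
      ext x
      simp only [Finset.mem_insert, hU, Finset.mem_compl, Finset.mem_insert,
        Finset.mem_singleton, Finset.mem_univ, iff_true]
      tauto
    -- rewrite the three sums via NL
    have hMf : Mf p (k + 2) i j = u * v * E (ww p) U k := by
      have hfil : univ.filter (fun I : Finset (Fin N) => I.card = k + 2 ∧ i ∈ I ∧ j ∈ I) =
          univ.filter (fun I : Finset (Fin N) => I.card = k + 2 ∧ ({i, j} : Finset (Fin N)) ⊆ I) := by
        ext I
        simp only [Finset.mem_filter, Finset.insert_subset_iff, Finset.singleton_subset_iff]
      have hcard : ({i, j} : Finset (Fin N)).card = 2 := by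
        rw [Finset.card_insert_of_notMem (by simp [hij]), Finset.card_singleton]
      have := NL (p := p) (S := k + 2) ({i, j} : Finset (Fin N)) (by omega)
      rw [Mf, hfil, this, hcard]
      have hprod : ∏ x ∈ ({i, j} : Finset (Fin N)), ww p x = u * v := by
        rw [Finset.prod_insert (by simp [hij]), Finset.prod_singleton]
      rw [hprod, Nat.add_sub_cancel, ← hU]
    have hNi : Nf p (k + 2) i = u * E (ww p) (insert j U) (k + 1) := by
      have hfil : univ.filter (fun I : Finset (Fin N) => I.card = k + 2 ∧ i ∈ I) =
          univ.filter (fun I : Finset (Fin N) => I.card = k + 2 ∧ ({i} : Finset (Fin N)) ⊆ I) := by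
        ext I
        simp only [Finset.mem_filter, Finset.singleton_subset_iff]
      have := NL (p := p) (S := k + 2) ({i} : Finset (Fin N)) (by simp)
      rw [Nf, hfil, this, Finset.card_singleton, Finset.prod_singleton, ← hins1]
      rfl
    have hNj : Nf p (k + 2) j = v * E (ww p) (insert i U) (k + 1) := by
      have hfil : univ.filter (fun I : Finset (Fin N) => I.card = k + 2 ∧ j ∈ I) =
          univ.filter (fun I : Finset (Fin N) => I.card = k + 2 ∧ ({j} : Finset (Fin N)) ⊆ I) := by
        ext I
        simp only [Finset.mem_filter, Finset.singleton_subset_iff]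
      have := NL (p := p) (S := k + 2) ({j} : Finset (Fin N)) (by simp)
      rw [Nf, hfil, this, Finset.card_singleton, Finset.prod_singleton, ← hins3]
      rfl
    have hiU' : i ∉ U := fun h => hiU (Finset.mem_insert_of_mem h)
    have hZf : Zf p (k + 2) = E (ww p) U (k + 2) + v * E (ww p) U (k + 1) +
        u * (E (ww p) U (k + 1) + v * E (ww p) U k) := by
      rw [Zf_eq, ← hins2, E_insert hiU (k + 1), E_insert hjU (k + 1), E_insert hjU k]
    have hNiU : E (ww p) (insert j U) (k + 1) = E (ww p) U (k + 1) + v * E (ww p) U k :=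
      E_insert hjU k
    have hNjU : E (ww p) (insert i U) (k + 1) = E (ww p) U (k + 1) + u * E (ww p) U k :=
      E_insert hiU' k
    rw [hMf, hNi, hNj, hZf, hNiU, hNjU]
    have hlog := E_logConcave hww U k
    have e0 := E_nonneg (fun x => (hww x).le) U k
    have e1 := E_nonneg (fun x => (hww x).le) U (k + 1)
    have e2 := E_nonneg (fun x => (hww x).le) U (k + 2)
    nlinarith [mul_le_mul_of_nonneg_left hlog (le_of_lt (mul_pos (hww i) (hww j))),
      hww i, hww j, mul_pos (hww i) (hww j)]

end RejAux

theorem inclusion_matrix_psd_upper_bound {N S : ℕ} (p : Fin N → ℝ)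
    (hp : ∀ i, p i ∈ Set.Ioo (0 : ℝ) 1) (hS : S ≤ N) :
    (Matrix.vecMulVec (fun i => incl p S {i}) (fun i => incl p S {i}) +
        (2 : ℝ) • Matrix.diagonal (fun i => incl p S {i}) -
      condMat p S ∅).PosSemidef := by
  classical
  have hC : 0 < ∏ j, (1 - p j) := RejAux.Cpos hp
  have hZ : 0 < RejAux.Zf p S := RejAux.Zf_pos hp hS
  set π : Fin N → ℝ := fun i => RejAux.Nf p S i / RejAux.Zf p S with hπdef
  set m : Fin N → Fin N → ℝ := fun i j => RejAux.Mf p S i j / RejAux.Zf p S with hmdef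
  have hPBsum : ∀ (s : Finset (Finset (Fin N))), ∑ I ∈ s, PB p I =
      (∏ j, (1 - p j)) * ∑ I ∈ s, ∏ x ∈ I, RejAux.ww p x := by
    intro s; rw [Finset.mul_sum]; exact Finset.sum_congr rfl fun I _ => RejAux.PB_eq hp I
  have hincl : ∀ i, incl p S {i} = π i := by
    intro i
    rw [incl]
    have h1 : univ.filter (fun I : Finset (Fin N) => I.card = S ∧ ({i} : Finset (Fin N)) ⊆ I) =
        univ.filter (fun I : Finset (Fin N) => I.card = S ∧ i ∈ I) := by
      ext I; simp [Finset.singleton_subset_iff]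
    rw [h1, hPBsum, hPBsum, mul_div_mul_left _ _ (ne_of_gt hC)]
    rfl
  have hcond : ∀ i j, condMat p S ∅ i j = m i j := by
    intro i j
    simp only [condMat, Matrix.of_apply]
    have h1 : univ.filter (fun I : Finset (Fin N) =>
          I.card = S ∧ ∅ ⊆ I ∧ i ∈ I \ ∅ ∧ j ∈ I \ ∅) =
        univ.filter (fun I : Finset (Fin N) => I.card = S ∧ i ∈ I ∧ j ∈ I) := by
      ext I; simp
    rw [h1, hPBsum, hPBsum, mul_div_mul_left _ _ (ne_of_gt hC)]
    rfl
  have hπ_nonneg : ∀ i, 0 ≤ π i := fun i => div_nonneg (RejAux.Nf_nonneg hp S i) hZ.le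
  set c : Fin N → Fin N → ℝ := fun i j => π i * π j - m i j with hcdef
  have hmsym : ∀ i j, m i j = m j i := by
    intro i j; simp only [hmdef]; rw [RejAux.Mf_symm]
  have hcsym : ∀ i j, c i j = c j i := by
    intro i j; simp only [hcdef]; rw [hmsym i j, mul_comm]
  have hmdiag : ∀ i, m i i = π i := by
    intro i; simp only [hmdef, hπdef, RejAux.Mf_diag]
  have hrowm : ∀ i, ∑ j, m i j = (S : ℝ) * π i := by
    intro i
    simp only [hmdef]
    rw [← Finset.sum_div, RejAux.K2, hπdef]
    simp only
    rw [mul_div_assoc]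
  have hsumπ : ∑ j, π j = (S : ℝ) := by
    simp only [hπdef]
    rw [← Finset.sum_div, RejAux.K3, mul_div_assoc, div_self (ne_of_gt hZ), mul_one]
  have hrowc : ∀ i, ∑ j, c i j = 0 := by
    intro i
    simp only [hcdef]
    rw [Finset.sum_sub_distrib, ← Finset.mul_sum, hsumπ, hrowm]
    ring
  have hcoff : ∀ i j, i ≠ j → 0 ≤ c i j := by
    intro i j hij
    have h1 := RejAux.K1 hp S hij
    simp only [hcdef, hπdef, hmdef, sub_nonneg]
    rw [div_mul_div_comm, div_le_div_iff₀ hZ (mul_pos hZ hZ)]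
    nlinarith [h1, hZ]
  have hcdiag : ∀ i, c i i = π i ^ 2 - π i := by
    intro i; simp only [hcdef]; rw [hmdiag]; ring
  set A := (Matrix.vecMulVec (fun i => incl p S {i}) (fun i => incl p S {i}) +
        (2 : ℝ) • Matrix.diagonal (fun i => incl p S {i}) - condMat p S ∅) with hAdef
  have hA : ∀ i j, A i j = π i * π j + (if i = j then 2 * π i else 0) - m i j := by
    intro i j
    simp only [hAdef, Matrix.sub_apply, Matrix.add_apply, Matrix.smul_apply,
      Matrix.vecMulVec_apply, Matrix.diagonal_apply, smul_eq_mul, hincl, hcond]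
    by_cases h : i = j
    · simp [h]
    · simp [h]
  rw [Matrix.posSemidef_iff_dotProduct_mulVec]
  constructor
  · ext i j
    rw [Matrix.conjTranspose_apply, star_trivial, hA j i, hA i j]
    by_cases h : i = j
    · subst h; rfl
    · rw [if_neg h, if_neg (fun hh => h hh.symm), hmsym j i, mul_comm (π j) (π i)]
  · intro x
    have hgoal : dotProduct (star x) (A.mulVec x) = ∑ i, x i * ∑ j, A i j * x j := by
      simp only [dotProduct, Matrix.mulVec, Pi.star_apply, star_trivial]
    rw [hgoal]
    have key : ∑ i, x i * ∑ j, A i j * x j =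
        (∑ i, ∑ j, x i * x j * c i j) + 2 * ∑ i, x i ^ 2 * π i := by
      calc ∑ i, x i * ∑ j, A i j * x j
          = ∑ i, ∑ j, (x i * x j * c i j + if j = i then 2 * x i ^ 2 * π i else 0) := by
            refine Finset.sum_congr rfl fun i _ => ?_
            rw [Finset.mul_sum]
            refine Finset.sum_congr rfl fun j _ => ?_
            rw [hA]
            by_cases h : i = j
            · subst h
              rw [if_pos (rfl : i = i), if_pos (rfl : i = i)]
              simp only [hcdef]; ring
            · rw [if_neg h, if_neg (fun hh => h hh.symm)]; simp only [hcdef]; ring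
        _ = ∑ i, ((∑ j, x i * x j * c i j) + 2 * x i ^ 2 * π i) := by
            refine Finset.sum_congr rfl fun i _ => ?_
            rw [Finset.sum_add_distrib, Finset.sum_ite_eq' univ i (fun _ => 2 * x i ^ 2 * π i),
              if_pos (Finset.mem_univ i)]
        _ = _ := by
            rw [Finset.sum_add_distrib, Finset.mul_sum]
            congr 1
            exact Finset.sum_congr rfl fun i _ => by ring
    rw [key]
    have e1 : ∀ i : Fin N, ∑ j ∈ univ.erase i, c i j = -(c i i) := by
      intro i
      have h := Finset.add_sum_erase univ (fun j => c i j) (Finset.mem_univ i)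
      rw [hrowc i] at h
      linarith
    have e2 : ∑ i, ∑ j ∈ univ.erase i, (x i ^ 2 / 2) * c i j
        = -∑ i, (x i ^ 2 / 2) * c i i := by
      rw [← Finset.sum_neg_distrib]
      refine Finset.sum_congr rfl fun i _ => ?_
      rw [← Finset.mul_sum, e1 i]
      ring
    have e3 : ∑ i, ∑ j ∈ univ.erase i, (x j ^ 2 / 2) * c i j
        = -∑ i, (x i ^ 2 / 2) * c i i := by
      have h4 : ∀ i : Fin N, ∑ j ∈ univ.erase i, (x j ^ 2 / 2) * c i j
          = (∑ j, (x j ^ 2 / 2) * c i j) - (x i ^ 2 / 2) * c i i := by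
        intro i
        have h := Finset.add_sum_erase univ (fun j => (x j ^ 2 / 2) * c i j) (Finset.mem_univ i)
        linarith
      rw [Finset.sum_congr rfl (fun i _ => h4 i), Finset.sum_sub_distrib]
      have h5 : ∑ i, ∑ j, (x j ^ 2 / 2) * c i j = 0 := by
        rw [Finset.sum_comm]
        refine Finset.sum_eq_zero fun j _ => ?_
        rw [← Finset.mul_sum]
        have h6 : ∑ i, c i j = 0 := by
          rw [Finset.sum_congr rfl (fun i _ => hcsym i j)]
          exact hrowc j
        rw [h6, mul_zero]
      rw [h5]
      ring
    have hsplit : ∑ i, ∑ j ∈ univ.erase i, ((x i ^ 2 + x j ^ 2) / 2) * c i j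
        = -∑ i, x i ^ 2 * c i i := by
      calc ∑ i, ∑ j ∈ univ.erase i, ((x i ^ 2 + x j ^ 2) / 2) * c i j
          = ∑ i, (∑ j ∈ univ.erase i, (x i ^ 2 / 2) * c i j +
              ∑ j ∈ univ.erase i, (x j ^ 2 / 2) * c i j) := by
            refine Finset.sum_congr rfl fun i _ => ?_
            rw [← Finset.sum_add_distrib]
            exact Finset.sum_congr rfl fun j _ => by ring
        _ = (∑ i, ∑ j ∈ univ.erase i, (x i ^ 2 / 2) * c i j) +
              ∑ i, ∑ j ∈ univ.erase i, (x j ^ 2 / 2) * c i j := Finset.sum_add_distrib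
        _ = -∑ i, x i ^ 2 * c i i := by
            rw [e2, e3, ← neg_add, ← Finset.sum_add_distrib]
            congr 1
            exact Finset.sum_congr rfl fun i _ => by ring
    have step1 : ∀ i ∈ (univ : Finset (Fin N)),
        x i ^ 2 * c i i - ∑ j ∈ univ.erase i, ((x i ^ 2 + x j ^ 2) / 2) * c i j ≤
          ∑ j, x i * x j * c i j := by
      intro i _
      rw [← Finset.add_sum_erase univ (fun j => x i * x j * c i j) (Finset.mem_univ i)]
      have h2 : -∑ j ∈ univ.erase i, ((x i ^ 2 + x j ^ 2) / 2) * c i j ≤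
          ∑ j ∈ univ.erase i, x i * x j * c i j := by
        rw [← Finset.sum_neg_distrib]
        apply Finset.sum_le_sum
        intro j hj
        have h0 : 0 ≤ c i j := hcoff i j (Ne.symm (Finset.ne_of_mem_erase hj))
        have heq : x i * x j * c i j - (-(((x i ^ 2 + x j ^ 2) / 2) * c i j)) =
            ((x i + x j) ^ 2 / 2) * c i j := by ring
        have hge : 0 ≤ ((x i + x j) ^ 2 / 2) * c i j :=
          mul_nonneg (by positivity) h0
        linarith
      have h1 : x i ^ 2 * c i i = x i * x i * c i i := by ring
      linarith
    have step2 := Finset.sum_le_sum step1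
    rw [Finset.sum_sub_distrib, hsplit] at step2
    have hfin : ∑ i, x i ^ 2 * c i i + ∑ i, x i ^ 2 * π i = ∑ i, x i ^ 2 * π i ^ 2 := by
      rw [← Finset.sum_add_distrib]
      refine Finset.sum_congr rfl fun i _ => ?_
      rw [hcdiag i]; ring
    have hfin2 : 0 ≤ ∑ i, x i ^ 2 * π i ^ 2 :=
      Finset.sum_nonneg fun i _ => mul_nonneg (sq_nonneg _) (sq_nonneg _)
    linarith
end

section
/- For rejective sampling with parameter S and weights p_i ∈ (0,1) with Σ_i p_i = S, and a dictionary D ∈ ℝ^{d×N}, the covariance of signals y = D 1_I-weighted satisfies ‖D E_S[1_I 1_I^*] D^*‖ ≤ (S + 2) ‖D D_{√π}‖², where D_{√π} is the diagonal matrix with entries √π_i and π_i = P_S(i ∈ I). -/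
open Finset

open scoped Matrix Matrix.Norms.L2Operator

section aux

open Matrix
open scoped RealInnerProductSpace

private lemma clm_norm_le' {E : Type*} [NormedAddCommGroup E] [InnerProductSpace ℝ E]
    (T : E →L[ℝ] E) {c : ℝ} (hc : 0 ≤ c)
    (hsym : ∀ x y : E, ⟪T x, y⟫ = ⟪x, T y⟫)
    (hpos : ∀ x : E, 0 ≤ ⟪T x, x⟫)
    (hbd : ∀ x : E, ⟪T x, x⟫ ≤ c * ‖x‖ ^ 2) : ‖T‖ ≤ c := by
  apply ContinuousLinearMap.opNorm_le_bound _ hc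
  intro x
  rcases eq_or_ne (T x) 0 with h0 | h0
  · rw [h0, norm_zero]; positivity
  rcases eq_or_ne x 0 with hx0 | hx0
  · simp [hx0] at h0
  set y : E := (‖x‖ / ‖T x‖) • T x with hy
  have hxpos : (0:ℝ) < ‖x‖ := norm_pos_iff.mpr hx0
  have hTxpos : (0:ℝ) < ‖T x‖ := norm_pos_iff.mpr h0
  have hyn : ‖y‖ = ‖x‖ := by
    rw [hy, norm_smul, Real.norm_eq_abs, abs_of_pos (by positivity),
      div_mul_cancel₀ _ hTxpos.ne']
  have hpol : 4 * ⟪T x, y⟫ = ⟪T (x + y), x + y⟫ - ⟪T (x - y), x - y⟫ := by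
    have h1 : ⟪T y, x⟫ = ⟪T x, y⟫ := by rw [hsym, real_inner_comm]
    simp only [map_add, map_sub, inner_add_left, inner_add_right, inner_sub_left,
      inner_sub_right]
    linarith
  have hkey : 4 * ⟪T x, y⟫ ≤ c * (2 * ‖x‖) ^ 2 := by
    rw [hpol]
    have h2 := hpos (x - y)
    have h3 := hbd (x + y)
    have h4 : ‖x + y‖ ≤ 2 * ‖x‖ := by
      calc ‖x + y‖ ≤ ‖x‖ + ‖y‖ := norm_add_le _ _
      _ = 2 * ‖x‖ := by rw [hyn]; ring
    have h5 : c * ‖x + y‖ ^ 2 ≤ c * (2 * ‖x‖) ^ 2 := by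
      apply mul_le_mul_of_nonneg_left _ hc
      exact pow_le_pow_left₀ (norm_nonneg _) h4 2
    linarith
  have hip : ⟪T x, y⟫ = ‖x‖ * ‖T x‖ := by
    rw [hy, real_inner_smul_right, real_inner_self_eq_norm_sq]
    field_simp
  rw [hip] at hkey
  nlinarith

private lemma quad_le_norm' {d : ℕ} (B : Matrix (Fin d) (Fin d) ℝ) (v : Fin d → ℝ) :
    v ⬝ᵥ B *ᵥ v ≤ ‖B‖ * (v ⬝ᵥ v) := by
  set x : EuclideanSpace ℝ (Fin d) := (WithLp.equiv 2 _).symm v with hx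
  have h1 : ⟪(toEuclideanCLM (𝕜 := ℝ) B) x, x⟫ = v ⬝ᵥ B *ᵥ v := by
    rw [EuclideanSpace.inner_eq_star_dotProduct]
    simp [hx, dotProduct_comm]
  have h2 : ⟪x, x⟫ = v ⬝ᵥ v := by
    rw [EuclideanSpace.inner_eq_star_dotProduct]; simp [hx]
  have h3 : ⟪(toEuclideanCLM (𝕜 := ℝ) B) x, x⟫ ≤ ‖B‖ * ⟪x, x⟫ := by
    calc ⟪(toEuclideanCLM (𝕜 := ℝ) B) x, x⟫ ≤ ‖(toEuclideanCLM (𝕜 := ℝ) B) x‖ * ‖x‖ :=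
          real_inner_le_norm _ _
    _ ≤ ‖(toEuclideanCLM (𝕜 := ℝ) B)‖ * ‖x‖ * ‖x‖ := by
          gcongr; exact (toEuclideanCLM (𝕜 := ℝ) B).le_opNorm x
    _ = ‖B‖ * ⟪x, x⟫ := by rw [real_inner_self_eq_norm_sq]; rw [Matrix.cstar_norm_def]; ring
  rw [h1, h2] at *
  linarith [h3]

private lemma matrix_norm_le' {d : ℕ} (X : Matrix (Fin d) (Fin d) ℝ) {c : ℝ} (hc : 0 ≤ c)
    (hsym : Xᵀ = X)
    (hpos : ∀ v : Fin d → ℝ, 0 ≤ v ⬝ᵥ X *ᵥ v)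
    (hbd : ∀ v : Fin d → ℝ, v ⬝ᵥ X *ᵥ v ≤ c * (v ⬝ᵥ v)) : ‖X‖ ≤ c := by
  rw [Matrix.cstar_norm_def]
  have key : ∀ x : EuclideanSpace ℝ (Fin d),
      ⟪(toEuclideanCLM (𝕜 := ℝ) X) x, x⟫ = (WithLp.equiv 2 _ x) ⬝ᵥ X *ᵥ (WithLp.equiv 2 _ x) := by
    intro x
    rw [EuclideanSpace.inner_eq_star_dotProduct]
    simp [dotProduct_comm]
  apply clm_norm_le' _ hc
  · intro x y
    rw [EuclideanSpace.inner_eq_star_dotProduct, EuclideanSpace.inner_eq_star_dotProduct]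
    simp only [Matrix.ofLp_toEuclideanCLM]
    simp only [star_trivial]
    rw [Matrix.dotProduct_mulVec]
    conv_rhs => rw [← hsym, Matrix.mulVec_transpose]
  · intro x; rw [key]; exact hpos _
  · intro x
    rw [key]
    have := hbd (WithLp.equiv 2 _ x)
    have hn : ‖x‖ ^ 2 = (WithLp.equiv 2 _ x) ⬝ᵥ (WithLp.equiv 2 _ x) := by
      rw [← real_inner_self_eq_norm_sq, EuclideanSpace.inner_eq_star_dotProduct]; simp
    rw [hn]; exact this

variable {N S : ℕ} (p : Fin N → ℝ)

private lemma PB_pos' (hp : ∀ i, p i ∈ Set.Ioo (0:ℝ) 1) (I : Finset (Fin N)) : 0 < PB p I := by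
  apply mul_pos
  · exact Finset.prod_pos fun i _ => (hp i).1
  · exact Finset.prod_pos fun j _ => by linarith [(hp j).2]

private lemma Z_pos' (hp : ∀ i, p i ∈ Set.Ioo (0:ℝ) 1) (hS : S ≤ N) :
    0 < ∑ I ∈ univ.filter (fun I : Finset (Fin N) => I.card = S), PB p I := by
  apply Finset.sum_pos (fun I _ => PB_pos' p hp I)
  obtain ⟨I, -, hI⟩ := Finset.exists_subset_card_eq (s := (univ : Finset (Fin N))) (by simpa using hS)
  exact ⟨I, by simp [hI]⟩

private lemma quadM' (w : Fin N → ℝ) :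
    w ⬝ᵥ condMat p S ∅ *ᵥ w =
      (∑ I ∈ univ.filter (fun I : Finset (Fin N) => I.card = S), PB p I)⁻¹ *
        ∑ I ∈ univ.filter (fun I : Finset (Fin N) => I.card = S),
          PB p I * (∑ i ∈ I, w i) ^ 2 := by
  set F := univ.filter (fun I : Finset (Fin N) => I.card = S) with hF
  set Z := ∑ I ∈ F, PB p I with hZ
  have hnum : ∀ i j : Fin N,
      (∑ I ∈ univ.filter (fun I => I.card = S ∧ (∅ : Finset (Fin N)) ⊆ I ∧
          i ∈ I \ ∅ ∧ j ∈ I \ ∅), PB p I) =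
      ∑ I ∈ F, (if i ∈ I then (1:ℝ) else 0) * (if j ∈ I then (1:ℝ) else 0) * PB p I := by
    intro i j
    rw [hF, Finset.sum_filter, Finset.sum_filter]
    apply Finset.sum_congr rfl
    intro I _
    by_cases h1 : I.card = S <;> by_cases h2 : i ∈ I <;> by_cases h3 : j ∈ I <;>
      simp [h1, h2, h3]
  simp only [dotProduct, Matrix.mulVec, dotProduct, condMat, Matrix.of_apply,
    hnum, div_eq_mul_inv, ← hF, ← hZ]
  calc ∑ i, w i * ∑ j, (∑ I ∈ F, (if i ∈ I then (1:ℝ) else 0) * (if j ∈ I then (1:ℝ) else 0)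
          * PB p I) * Z⁻¹ * w j
      = ∑ I ∈ F, (∑ i, (if i ∈ I then w i else 0)) * (∑ j, (if j ∈ I then w j else 0))
          * (PB p I * Z⁻¹) := by
        simp only [Finset.sum_mul, Finset.mul_sum]
        conv_lhs => enter [2, y]; rw [Finset.sum_comm]
        rw [Finset.sum_comm]
        apply Finset.sum_congr rfl
        intro I _
        apply Finset.sum_congr rfl
        intro y _
        apply Finset.sum_congr rfl
        intro x _
        by_cases h2 : x ∈ I <;> by_cases h3 : y ∈ I <;> simp [h2, h3] <;> ring
    _ = Z⁻¹ * ∑ I ∈ F, PB p I * (∑ i ∈ I, w i) ^ 2 := by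
        rw [Finset.mul_sum]
        apply Finset.sum_congr rfl
        intro I _
        rw [Finset.sum_ite_mem, Finset.univ_inter]
        ring

private lemma quadDiag' (w : Fin N → ℝ) :
    w ⬝ᵥ (Matrix.diagonal (fun i => incl p S {i})) *ᵥ w =
      (∑ I ∈ univ.filter (fun I : Finset (Fin N) => I.card = S), PB p I)⁻¹ *
        ∑ I ∈ univ.filter (fun I : Finset (Fin N) => I.card = S),
          PB p I * ∑ i ∈ I, (w i) ^ 2 := by
  set F := univ.filter (fun I : Finset (Fin N) => I.card = S) with hF
  set Z := ∑ I ∈ F, PB p I with hZ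
  have hnum : ∀ i : Fin N,
      (∑ I ∈ univ.filter (fun I => I.card = S ∧ ({i} : Finset (Fin N)) ⊆ I), PB p I) =
      ∑ I ∈ F, (if i ∈ I then (1:ℝ) else 0) * PB p I := by
    intro i
    rw [hF, Finset.sum_filter, Finset.sum_filter]
    apply Finset.sum_congr rfl
    intro I _
    by_cases h1 : I.card = S <;> by_cases h2 : i ∈ I <;>
      simp [h1, h2, Finset.singleton_subset_iff]
  simp only [dotProduct, Matrix.mulVec_diagonal, incl, hnum, div_eq_mul_inv, ← hF, ← hZ]
  calc ∑ i, w i * ((∑ I ∈ F, (if i ∈ I then (1:ℝ) else 0) * PB p I) * Z⁻¹ * w i)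
      = ∑ I ∈ F, (∑ i, (if i ∈ I then w i ^ 2 else 0)) * (PB p I * Z⁻¹) := by
        simp only [Finset.sum_mul, Finset.mul_sum]
        rw [Finset.sum_comm]
        apply Finset.sum_congr rfl
        intro I _
        apply Finset.sum_congr rfl
        intro i _
        by_cases h2 : i ∈ I <;> simp [h2] <;> ring
    _ = Z⁻¹ * ∑ I ∈ F, PB p I * ∑ i ∈ I, (w i) ^ 2 := by
        rw [Finset.mul_sum]
        apply Finset.sum_congr rfl
        intro I _
        rw [Finset.sum_ite_mem, Finset.univ_inter]
        ring

end aux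

theorem signal_covariance_bound {N S d : ℕ} (p : Fin N → ℝ)
    (hp : ∀ i, p i ∈ Set.Ioo (0 : ℝ) 1) (hsum : ∑ i, p i = S) (hS : S ≤ N)
    (D : Matrix (Fin d) (Fin N) ℝ) :
    ‖D * condMat p S ∅ * Dᵀ‖ ≤
      (S + 2) * ‖D * Matrix.diagonal (fun i => Real.sqrt (incl p S {i}))‖ ^ 2 := by
  classical
  set F := univ.filter (fun I : Finset (Fin N) => I.card = S) with hF
  set Z := ∑ I ∈ F, PB p I with hZdef
  have hZ : 0 < Z := Z_pos' p hp hS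
  set π : Fin N → ℝ := fun i => incl p S {i} with hπ
  have hπ0 : ∀ i, 0 ≤ π i := by
    intro i
    apply div_nonneg _ hZ.le
    exact Finset.sum_nonneg fun I _ => (PB_pos' p hp I).le
  set C := D * Matrix.diagonal (fun i => Real.sqrt (π i)) with hC
  have hCC : C * Cᴴ = D * Matrix.diagonal π * Dᵀ := by
    rw [hC, Matrix.conjTranspose_mul, Matrix.diagonal_conjTranspose]
    have hstar : star (fun i => Real.sqrt (π i)) = fun i => Real.sqrt (π i) := by
      funext i; simp
    rw [hstar]
    have hd : (fun i => Real.sqrt (π i) * Real.sqrt (π i)) = π := by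
      funext i; exact Real.mul_self_sqrt (hπ0 i)
    have hDH : Dᴴ = Dᵀ := by
      ext i j
      simp [Matrix.conjTranspose_apply]
    calc D * Matrix.diagonal (fun i => Real.sqrt (π i)) *
          (Matrix.diagonal (fun i => Real.sqrt (π i)) * Dᴴ)
        = D * (Matrix.diagonal (fun i => Real.sqrt (π i)) *
            Matrix.diagonal (fun i => Real.sqrt (π i)) * Dᴴ) := by
          simp only [Matrix.mul_assoc]
      _ = D * (Matrix.diagonal π * Dᵀ) := by
          rw [Matrix.diagonal_mul_diagonal, hd, hDH]
      _ = D * Matrix.diagonal π * Dᵀ := by rw [Matrix.mul_assoc]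
  have hnormC : ‖C * Cᴴ‖ = ‖C‖ ^ 2 := by
    have h := Matrix.l2_opNorm_conjTranspose_mul_self Cᴴ
    rw [Matrix.conjTranspose_conjTranspose, Matrix.l2_opNorm_conjTranspose] at h
    rw [h]; ring
  have hMsym : (condMat p S ∅)ᵀ = condMat p S ∅ := by
    ext i j
    simp only [Matrix.transpose_apply, condMat, Matrix.of_apply]
    congr 1
    apply Finset.sum_congr _ (fun _ _ => rfl)
    apply Finset.filter_congr
    intro I _
    tauto
  have htrans : ∀ (M : Matrix (Fin N) (Fin N) ℝ) (v : Fin d → ℝ),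
      v ⬝ᵥ (D * M * Dᵀ) *ᵥ v = (Dᵀ *ᵥ v) ⬝ᵥ M *ᵥ (Dᵀ *ᵥ v) := by
    intro M v
    rw [← Matrix.mulVec_mulVec, ← Matrix.mulVec_mulVec, Matrix.dotProduct_mulVec,
      ← Matrix.mulVec_transpose]
  have hquadA : ∀ v : Fin d → ℝ, v ⬝ᵥ (D * condMat p S ∅ * Dᵀ) *ᵥ v =
      Z⁻¹ * ∑ I ∈ F, PB p I * (∑ i ∈ I, (Dᵀ *ᵥ v) i) ^ 2 := by
    intro v; rw [htrans, quadM']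
  have hquadB : ∀ v : Fin d → ℝ, v ⬝ᵥ (D * Matrix.diagonal π * Dᵀ) *ᵥ v =
      Z⁻¹ * ∑ I ∈ F, PB p I * ∑ i ∈ I, ((Dᵀ *ᵥ v) i) ^ 2 := by
    intro v; rw [htrans, quadDiag']
  have hcard : ∀ I ∈ F, I.card = S := by
    intro I hI; exact (Finset.mem_filter.mp hI).2
  apply matrix_norm_le'
  · positivity
  · rw [Matrix.transpose_mul, Matrix.transpose_mul, Matrix.transpose_transpose, hMsym,
      Matrix.mul_assoc]
  · intro v
    rw [hquadA]
    apply mul_nonneg (inv_nonneg.mpr hZ.le)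
    exact Finset.sum_nonneg fun I _ => mul_nonneg (PB_pos' p hp I).le (sq_nonneg _)
  · intro v
    rw [hquadA]
    have step1 : Z⁻¹ * ∑ I ∈ F, PB p I * (∑ i ∈ I, (Dᵀ *ᵥ v) i) ^ 2 ≤
        ((S : ℝ) + 2) * (Z⁻¹ * ∑ I ∈ F, PB p I * ∑ i ∈ I, ((Dᵀ *ᵥ v) i) ^ 2) := by
      rw [← mul_assoc, mul_comm ((S : ℝ) + 2) Z⁻¹, mul_assoc]
      apply mul_le_mul_of_nonneg_left _ (inv_nonneg.mpr hZ.le)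
      rw [Finset.mul_sum]
      apply Finset.sum_le_sum
      intro I hI
      have h1 : (∑ i ∈ I, (Dᵀ *ᵥ v) i) ^ 2 ≤ (S : ℝ) * ∑ i ∈ I, ((Dᵀ *ᵥ v) i) ^ 2 := by
        have := sq_sum_le_card_mul_sum_sq (s := I) (f := fun i => (Dᵀ *ᵥ v) i)
        rwa [hcard I hI] at this
      have h2 : (0:ℝ) ≤ ∑ i ∈ I, ((Dᵀ *ᵥ v) i) ^ 2 :=
        Finset.sum_nonneg fun i _ => sq_nonneg _
      nlinarith [(PB_pos' p hp I).le, PB_pos' p hp I]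
    refine step1.trans ?_
    rw [← hquadB, ← hnormC, hCC]
    rw [mul_assoc]
    apply mul_le_mul_of_nonneg_left _ (by positivity)
    exact quad_le_norm' _ v
end
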